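/- arXiv:2102.02350 — 7 statements merged into one kernel-verified Lean document; each statement's English description precedes it below -/
import Mathlib

section
/- Let T be a decomposable tournament. Then there exist at most two vertices x of T such that the singleton {x} is a co-module of T. In particular, every co-modular decomposition of T contains at most two singleton elements. -/
/-- A tournament on a vertex type `V`: an irreflexive relation such that for all distinct
vertices exactly one of `arc x y`, `arc y x` holds. -/
structure Tournament (V : Type) where
  arc : V → V → Prop
  irrefl : ∀ x, ¬ arc x x
  total : ∀ x y, x ≠ y → (arc x y ↔ ¬ arc y x)

namespace Tournament

variable {V : Type}

/-- The arc set `A(T)` of a tournament, as a set of ordered pairs. -/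
def arcSet (T : Tournament V) : Set (V × V) := {p | T.arc p.1 p.2}

/-- `M` is a module of `T`. -/
def IsModule (T : Tournament V) (M : Set V) : Prop :=
  ∀ x ∈ M, ∀ y ∈ M, ∀ v ∉ M, (T.arc v x ↔ T.arc v y)

/-- The trivial modules: `∅`, singletons, and the whole vertex set. -/
def IsTrivialModule (_ : Tournament V) (M : Set V) : Prop :=
  M = ∅ ∨ (∃ x, M = {x}) ∨ M = Set.univ

/-- `M` is a nontrivial module of `T`. -/
def IsNontrivialModule (T : Tournament V) (M : Set V) : Prop :=
  T.IsModule M ∧ ¬ T.IsTrivialModule M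

/-- `T` is indecomposable if all its modules are trivial. -/
def Indecomposable (T : Tournament V) : Prop :=
  ∀ M : Set V, T.IsModule M → T.IsTrivialModule M

/-- `T` is decomposable if it is not indecomposable. -/
def Decomposable (T : Tournament V) : Prop := ¬ T.Indecomposable

/-- `M` is a co-module of `T`: `M` or its complement is a nontrivial module of `T`. -/
def IsComodule (T : Tournament V) (M : Set V) : Prop :=
  T.IsNontrivialModule M ∨ T.IsNontrivialModule Mᶜ

/-- A co-modular decomposition of `T`: a set of pairwise disjoint co-modules of `T`. -/
def IsComodularDecomposition (T : Tournament V) (D : Set (Set V)) : Prop :=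
  (∀ M ∈ D, T.IsComodule M) ∧ D.Pairwise Disjoint

/-- A minimal co-module: a co-module containing no other co-module. -/
def IsMinimalComodule (T : Tournament V) (M : Set V) : Prop :=
  T.IsComodule M ∧ ∀ N : Set V, T.IsComodule N → N ⊆ M → N = M

/-- A minimal nontrivial module: a nontrivial module containing no other nontrivial module. -/
def IsMinimalNontrivialModule (T : Tournament V) (M : Set V) : Prop :=
  T.IsNontrivialModule M ∧ ∀ N : Set V, T.IsNontrivialModule N → N ⊆ M → N = M

/-- The co-modular index `Δ(T)`: the maximum cardinality of a co-modular decomposition. -/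
noncomputable def Delta [Fintype V] (T : Tournament V) : ℕ :=
  sSup {n | ∃ D : Set (Set V), T.IsComodularDecomposition D ∧ D.ncard = n}

/-- The dual tournament `T*`. -/
def dual (T : Tournament V) : Tournament V where
  arc x y := T.arc y x
  irrefl := T.irrefl
  total x y h := T.total y x (Ne.symm h)

/-- The subtournament `T[X]` induced by `X ⊆ V(T)`. -/
def restrict (T : Tournament V) (X : Set V) : Tournament X where
  arc x y := T.arc x.1 y.1
  irrefl x := T.irrefl x.1
  total x y h := T.total x.1 y.1 (fun he => h (Subtype.ext he))

/-- Isomorphism of tournaments. -/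
def Iso {V W : Type} (T : Tournament V) (S : Tournament W) : Prop :=
  ∃ e : V ≃ W, ∀ x y, T.arc x y ↔ S.arc (e x) (e y)

/-- `T.Iso X` or `T.Iso X.dual`. -/
def IsoOrDual {V γ : Type} (T : Tournament V) (X : Tournament γ) : Prop :=
  T.Iso X ∨ T.Iso X.dual

/-- `Inv(T, B)`: the tournament obtained from `T` by reversing all arcs in `B ⊆ A(T)`. -/
def inv (T : Tournament V) (B : Set (V × V)) (hB : B ⊆ T.arcSet) : Tournament V where
  arc x y := (T.arc x y ∧ (x, y) ∉ B) ∨ (y, x) ∈ B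
  irrefl x h := by
    rcases h with ⟨h1, _⟩ | h2
    · exact T.irrefl x h1
    · exact T.irrefl x (hB h2)
  total x y hxy := by
    have hx := T.total x y hxy
    constructor
    · rintro (⟨h1, hnB⟩ | hB1)
      · rintro (⟨h2, _⟩ | hB2)
        · exact (hx.mp h1) h2
        · exact hnB hB2
      · rintro (⟨h2, hnB⟩ | hB2)
        · exact hnB hB1
        · exact (hx.mp (hB hB2)) (hB hB1)
    · intro h
      have hA : ¬(T.arc y x ∧ (y, x) ∉ B) := fun hc => h (Or.inl hc)
      have hB2 : (x, y) ∉ B := fun hc => h (Or.inr hc)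
      by_cases h1 : T.arc x y
      · exact Or.inl ⟨h1, hB2⟩
      · have h2 : T.arc y x := by
          by_contra h3
          exact h1 (hx.mpr h3)
        have h4 : (y, x) ∈ B := by
          by_contra h5
          exact hA ⟨h2, h5⟩
        exact Or.inr h4

/-- The decomposability index `δ(T)`: the least number of arcs whose reversal makes `T`
indecomposable. -/
noncomputable def delta [Fintype V] (T : Tournament V) : ℕ :=
  sInf {n | ∃ (B : Set (V × V)) (hB : B ⊆ T.arcSet),
    B.ncard = n ∧ (T.inv B hB).Indecomposable}

end Tournament

/-- The transitive tournament `n̲` on `{0, …, n-1}`. -/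
def transTournament (n : ℕ) : Tournament (Fin n) where
  arc i j := i.val < j.val
  irrefl i := by omega
  total i j h := by
    have : i.val ≠ j.val := fun he => h (Fin.ext he)
    omega

/-- The 3-cycle `C3`. -/
def C3 : Tournament (Fin 3) where
  arc i j := j.val = (i.val + 1) % 3
  irrefl i := by have := i.isLt; omega
  total i j h := by
    have hi := i.isLt
    have hj := j.isLt
    have : i.val ≠ j.val := fun he => h (Fin.ext he)
    omega

/-- The indecomposable tournament `U5` on 5 vertices. -/
def U5 : Tournament (Fin 5) where
  arc i j := (i, j) ∈
    ([(0,1),(0,2),(1,2),(3,0),(1,3),(2,3),(4,0),(4,1),(2,4),(3,4)] : List (Fin 5 × Fin 5))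
  irrefl := by decide
  total := by decide

/-- The indecomposable tournament `V5` on 5 vertices (obtained from `U5` by reversing `(3,4)`). -/
def V5 : Tournament (Fin 5) where
  arc i j := (i, j) ∈
    ([(0,1),(0,2),(1,2),(3,0),(1,3),(2,3),(4,0),(4,1),(2,4),(4,3)] : List (Fin 5 × Fin 5))
  irrefl := by decide
  total := by decide

/-- The indecomposable tournament `W5` on 5 vertices. -/
def W5 : Tournament (Fin 5) where
  arc i j := (i, j) ∈
    ([(0,1),(0,2),(0,3),(1,2),(1,3),(2,3),(4,0),(4,2),(1,4),(3,4)] : List (Fin 5 × Fin 5))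
  irrefl := by decide
  total := by decide

/-- The lexicographic sum `2̲(A, B)`: all arcs from `A` to `B`. -/
def sum2 {α β : Type} (A : Tournament α) (B : Tournament β) : Tournament (α ⊕ β) where
  arc x y :=
    match x, y with
    | .inl a, .inl a' => A.arc a a'
    | .inl _, .inr _ => True
    | .inr _, .inl _ => False
    | .inr b, .inr b' => B.arc b b'
  irrefl x := by
    cases x with
    | inl a => exact A.irrefl a
    | inr b => exact B.irrefl b
  total x y hxy := by
    cases x with
    | inl a =>
      cases y with
      | inl a' => exact A.total a a' (fun h => hxy (congrArg Sum.inl h))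
      | inr b' => simp
    | inr b =>
      cases y with
      | inl a' => simp
      | inr b' => exact B.total b b' (fun h => hxy (congrArg Sum.inr h))

/-- The lexicographic sum `C3(A, B, C)`. -/
def sumC3 {α β γ : Type} (A : Tournament α) (B : Tournament β) (C : Tournament γ) :
    Tournament (α ⊕ β ⊕ γ) where
  arc x y :=
    match x, y with
    | .inl a, .inl a' => A.arc a a'
    | .inl _, .inr (.inl _) => True
    | .inl _, .inr (.inr _) => False
    | .inr (.inl _), .inl _ => False
    | .inr (.inl b), .inr (.inl b') => B.arc b b'
    | .inr (.inl _), .inr (.inr _) => True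
    | .inr (.inr _), .inl _ => True
    | .inr (.inr _), .inr (.inl _) => False
    | .inr (.inr c), .inr (.inr c') => C.arc c c'
  irrefl x := by
    rcases x with a | b | c
    · exact A.irrefl a
    · exact B.irrefl b
    · exact C.irrefl c
  total x y hxy := by
    rcases x with a | b | c <;> rcases y with a' | b' | c'
    · exact A.total a a' (fun h => hxy (by rw [h]))
    · simp
    · simp
    · simp
    · exact B.total b b' (fun h => hxy (by rw [h]))
    · simp
    · simp
    · simp
    · exact C.total c c' (fun h => hxy (by rw [h]))

/-- The lexicographic sum of the tournaments `F i` over the tournament `S`. -/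
def lexSum {ι : Type} {f : ι → Type} (S : Tournament ι) (F : ∀ i, Tournament (f i)) :
    Tournament (Σ i, f i) where
  arc := Sigma.Lex S.arc (fun i => (F i).arc)
  irrefl x h := by
    cases h with
    | left a b h => exact S.irrefl _ h
    | right a b h => exact (F _).irrefl _ h
  total := by
    rintro ⟨i, a⟩ ⟨j, b⟩ hne
    by_cases hij : i = j
    · subst hij
      have hab : a ≠ b := fun h => hne (by rw [h])
      constructor
      · intro h h'
        cases h with
        | left a b h => exact S.irrefl i h
        | right a b h =>
          cases h' with
          | left a b h' => exact S.irrefl i h'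
          | right a b h' => exact (((F i).total _ _ hab).mp h) h'
      · intro h
        apply Sigma.Lex.right
        refine ((F i).total a b hab).mpr ?_
        intro h'
        exact h (Sigma.Lex.right _ _ h')
    · constructor
      · intro h h'
        have h1 : S.arc i j := by
          cases h with
          | left a b h => exact h
          | right a b h => exact absurd rfl hij
        have h2 : S.arc j i := by
          cases h' with
          | left a b h' => exact h'
          | right a b h' => exact absurd rfl hij
        exact ((S.total i j hij).mp h1) h2
      · intro h
        apply Sigma.Lex.left
        refine (S.total i j hij).mpr ?_
        intro h'
        exact h (Sigma.Lex.left _ _ h')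

/-- The tournament `1̲`. -/
abbrev oneT : Tournament (Fin 1) := transTournament 1

/-- The tournament `2̲`. -/
abbrev twoT : Tournament (Fin 2) := transTournament 2

/-- `2̲(1̲, X)`. -/
def w2 {β : Type} (X : Tournament β) : Tournament (Fin 1 ⊕ β) := sum2 oneT X

/-- `3̲(1̲, X, 1̲)`. -/
def w3 {β : Type} (X : Tournament β) : Tournament (Fin 1 ⊕ β ⊕ Fin 1) :=
  sum2 oneT (sum2 X oneT)

/-- `C3(1̲, 1̲, X)`. -/
def wC3 {β : Type} (X : Tournament β) : Tournament (Fin 1 ⊕ Fin 1 ⊕ β) := sumC3 oneT oneT X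

/-- The lexicographic product `S.2̲`. -/
def prodTwo {k : ℕ} (S : Tournament (Fin k)) : Tournament (Σ _ : Fin k, Fin 2) :=
  lexSum S (fun _ => twoT)

/-- A tournament on `Fin m`, packaged with its number of vertices. -/
abbrev PTour : Type := Σ m : ℕ, Tournament (Fin m)

def pOne : PTour := ⟨1, transTournament 1⟩
def pTwo : PTour := ⟨2, transTournament 2⟩
def pC3 : PTour := ⟨3, C3⟩

/-- Each summand `F i` is isomorphic to the prescribed tournament `(Q i).2`. -/
def FibersIso {k : ℕ} {f : Fin k → Type} (F : ∀ i, Tournament (f i)) (Q : Fin k → PTour) :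
    Prop :=
  ∀ i, (F i).Iso (Q i).2

/-- `δ(n)`: the maximum of `δ(T)` over the tournaments with `n` vertices. -/
noncomputable def deltaMax (n : ℕ) : ℕ := sSup {m | ∃ T : Tournament (Fin n), T.delta = m}

/-- `Δ(n)`: the maximum of `Δ(T)` over the tournaments with `n` vertices. -/
noncomputable def DeltaMax (n : ℕ) : ℕ := sSup {m | ∃ T : Tournament (Fin n), T.Delta = m}


/-- A decomposable tournament has at most two vertices `x` such that `{x}` is a
co-module; in particular every co-modular decomposition contains at most two singletons. -/
theorem stmt_0 {V : Type} [Fintype V] (T : Tournament V) (hT : T.Decomposable) :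
    {x : V | T.IsComodule {x}}.ncard ≤ 2 ∧
      ∀ D : Set (Set V), T.IsComodularDecomposition D →
        {M | M ∈ D ∧ ∃ x : V, M = {x}}.ncard ≤ 2 := by
  classical
  set S := {x : V | T.IsComodule {x}} with hS
  have hkey : ∀ x ∈ S, (∀ u, u ≠ x → T.arc x u) ∨ (∀ u, u ≠ x → T.arc u x) := by
    intro x hx
    rcases hx with h | h
    · exact absurd (Or.inr (Or.inl ⟨x, rfl⟩)) h.2
    · obtain ⟨hmod, hnt⟩ := h
      have hne : ({x}ᶜ : Set V).Nonempty := by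
        by_contra hcon
        exact hnt (Or.inl (Set.not_nonempty_iff_eq_empty.mp hcon))
      obtain ⟨u, hu⟩ := hne
      have hux : u ≠ x := hu
      have hxmem : x ∉ ({x}ᶜ : Set V) := by simp
      by_cases harc : T.arc x u
      · left
        intro v hv
        exact (hmod u hu v hv x hxmem).mp harc
      · right
        intro v hv
        have h2 := hmod u hu v hv x hxmem
        have hnv : ¬ T.arc x v := fun h' => harc (h2.mpr h')
        by_contra hvx
        exact hnv ((T.total x v (Ne.symm hv)).mpr hvx)
  set Dom := {x : V | ∀ u, u ≠ x → T.arc x u} with hDom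
  set Sub := {x : V | ∀ u, u ≠ x → T.arc u x} with hSub
  have hDom1 : Dom.ncard ≤ 1 := by
    refine (Set.ncard_le_one (Set.toFinite _)).mpr ?_
    intro a ha b hb
    by_contra hab
    exact (T.total a b hab).mp (ha b (Ne.symm hab)) (hb a hab)
  have hSub1 : Sub.ncard ≤ 1 := by
    refine (Set.ncard_le_one (Set.toFinite _)).mpr ?_
    intro a ha b hb
    by_contra hab
    exact (T.total b a (Ne.symm hab)).mp (ha b (Ne.symm hab)) (hb a hab)
  have hsub : S ⊆ Dom ∪ Sub := by
    intro x hx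
    rcases hkey x hx with h | h
    · exact Or.inl h
    · exact Or.inr h
  have hS2 : S.ncard ≤ 2 := by
    calc S.ncard ≤ (Dom ∪ Sub).ncard := Set.ncard_le_ncard hsub (Set.toFinite _)
    _ ≤ Dom.ncard + Sub.ncard := Set.ncard_union_le _ _
    _ ≤ 2 := by omega
  refine ⟨hS2, ?_⟩
  intro D hD
  have hsub2 : {M | M ∈ D ∧ ∃ x : V, M = {x}} ⊆ (fun x : V => ({x} : Set V)) '' S := by
    rintro M ⟨hMD, x, rfl⟩
    exact ⟨x, hD.1 _ hMD, rfl⟩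
  calc {M | M ∈ D ∧ ∃ x : V, M = {x}}.ncard
      ≤ ((fun x : V => ({x} : Set V)) '' S).ncard :=
        Set.ncard_le_ncard hsub2 (Set.toFinite _)
    _ = S.ncard := Set.ncard_image_of_injective _ Set.singleton_injective
    _ ≤ 2 := hS2
end

section
/- Let T be a decomposable tournament and let D be a co-modular decomposition of T. If D contains an element M which is not a module of T, then every element of D \ {M} is a nontrivial module of T. -/
lemma module_diff {V : Type} (T : Tournament V) (A B : Set V)
    (hA : T.IsModule A) (hB : T.IsModule B) (w : V) (hwB : w ∈ B) (hwA : w ∉ A) :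
    T.IsModule (A \ B) := by
  intro x hx y hy v hv
  by_cases hvA : v ∈ A
  · have hvB : v ∈ B := by
      by_contra hvB
      exact hv ⟨hvA, hvB⟩
    -- v ∈ A ∩ B, x,y ∈ A \ B, w ∈ B \ A
    have hxB : x ∉ B := hx.2
    have hyB : y ∉ B := hy.2
    have hxv : x ≠ v := fun h => hxB (h ▸ hvB)
    have hyv : y ≠ v := fun h => hyB (h ▸ hvB)
    have hxw : x ≠ w := fun h => hxB (h ▸ hwB)
    have hyw : y ≠ w := fun h => hyB (h ▸ hwB)
    have h1 : T.arc x v ↔ T.arc x w := hB v hvB w hwB x hxB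
    have h2 : T.arc y v ↔ T.arc y w := hB v hvB w hwB y hyB
    have h3 : T.arc w x ↔ T.arc w y := hA x hx.1 y hy.1 w hwA
    have t1 := T.total v x (Ne.symm hxv)
    have t2 := T.total v y (Ne.symm hyv)
    have t3 := T.total w x (Ne.symm hxw)
    have t4 := T.total w y (Ne.symm hyw)
    rw [t1, t2]
    tauto
  · exact hA x hx.1 y hy.1 v hvA

/-- If a co-modular decomposition `D` of a decomposable tournament contains an
element `M` which is not a module, then every other element of `D` is a nontrivial module. -/
theorem stmt_1 {V : Type} [Fintype V] (T : Tournament V) (hT : T.Decomposable)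
    (D : Set (Set V)) (hD : T.IsComodularDecomposition D)
    (M : Set V) (hM : M ∈ D) (hMmod : ¬ T.IsModule M) :
    ∀ N ∈ D, N ≠ M → T.IsNontrivialModule N := by
  obtain ⟨hcom, hdisj⟩ := hD
  -- M is a comodule but not a module, so Mᶜ is a nontrivial module
  have hMc : T.IsNontrivialModule Mᶜ := by
    rcases hcom M hM with h | h
    · exact absurd h.1 hMmod
    · exact h
  intro N hN hNM
  rcases hcom N hN with h | h
  · exact h
  · exfalso
    -- N ≠ ∅ since Nᶜ is nontrivial
    have hNne : N ≠ ∅ := by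
      intro h0
      apply h.2
      right; right
      rw [h0, Set.compl_empty]
    obtain ⟨w, hw⟩ := Set.nonempty_iff_ne_empty.mpr hNne
    have hdis : Disjoint N M := hdisj hN hM hNM
    have hwMc : w ∈ Mᶜ := fun hwM => Set.disjoint_left.mp hdis hw hwM
    have hwNc : w ∉ Nᶜ := fun hc => hc hw
    have hmod : T.IsModule (Nᶜ \ Mᶜ) := module_diff T Nᶜ Mᶜ h.1 hMc.1 w hwMc hwNc
    have hEq : Nᶜ \ Mᶜ = M := by
      ext v
      simp only [Set.mem_diff, Set.mem_compl_iff, not_not]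
      constructor
      · rintro ⟨_, h2⟩; exact h2
      · intro hvM
        exact ⟨fun hvN => Set.disjoint_left.mp hdis hvN hvM, hvM⟩
    rw [hEq] at hmod
    exact hMmod hmod
end

section
/- Let T be a decomposable tournament and let D be a co-modular decomposition of T. If D contains at least one singleton element, then every element of D of cardinality at least 2 is a nontrivial module of T. -/
/-- If a co-modular decomposition `D` of a decomposable tournament contains a
singleton, then every element of `D` of cardinality at least 2 is a nontrivial module. -/
theorem stmt_2 {V : Type} [Fintype V] (T : Tournament V) (hT : T.Decomposable)
    (D : Set (Set V)) (hD : T.IsComodularDecomposition D)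
    (hsing : ∃ M ∈ D, ∃ x : V, M = {x}) :
    ∀ N ∈ D, 2 ≤ N.ncard → T.IsNontrivialModule N := by
  obtain ⟨M, hMD, s, rfl⟩ := hsing
  intro N hND hN2
  rcases hD.1 N hND with h | hNc
  · exact h
  have hMne : ({s} : Set V) ≠ N := by
    intro h
    rw [← h] at hN2
    simp [Set.ncard_singleton] at hN2
  have hsN : s ∉ N := Set.disjoint_singleton_left.mp (hD.2 hMD hND hMne)
  have hsc : T.IsNontrivialModule ({s}ᶜ : Set V) := by
    rcases hD.1 _ hMD with h | h
    · exact absurd (Or.inr (Or.inl ⟨s, rfl⟩)) h.2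
    · exact h
  constructor
  · intro p hp q hq v hv
    have hps : p ≠ s := fun h => hsN (h ▸ hp)
    have hqs : q ≠ s := fun h => hsN (h ▸ hq)
    by_cases hvs : v = s
    · subst hvs
      exact hsc.1 p hps q hqs v (by simp)
    · have hpv : p ≠ v := fun h => hv (h ▸ hp)
      have hqv : q ≠ v := fun h => hv (h ▸ hq)
      have h1 : T.arc p v ↔ T.arc p s := hNc.1 v hv s hsN p (by simpa using hp)
      have h2 : T.arc q v ↔ T.arc q s := hNc.1 v hv s hsN q (by simpa using hq)
      have h3 : T.arc s p ↔ T.arc s q := hsc.1 p hps q hqs s (by simp)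
      have t1 := T.total v p (fun h => hpv h.symm)
      have t2 := T.total v q (fun h => hqv h.symm)
      have t3 := T.total s p (fun h => hps h.symm)
      have t4 := T.total s q (fun h => hqs h.symm)
      rw [t1, t2, h1, h2]
      rw [t3, t4] at h3
      tauto
  · rintro (h | ⟨x, h⟩ | h)
    · rw [h] at hN2; simp at hN2
    · rw [h] at hN2; simp [Set.ncard_singleton] at hN2
    · exact hsN (h ▸ Set.mem_univ s)
end

section
/- Let T be a tournament and let M be a minimal co-module of T with |M| = 3. Then the subtournament T[M] is isomorphic to the 3-cycle tournament C3. -/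
section Stmt5Aux

variable {V : Type}

lemma aux_pair_module (T : Tournament V) (u w : V)
    (h : ∀ v, v ≠ u → v ≠ w → (T.arc v u ↔ T.arc v w)) :
    T.IsModule {u, w} := by
  intro x hx y hy v hv
  simp only [Set.mem_insert_iff, Set.mem_singleton_iff, not_or] at hx hy hv
  rcases hx with rfl | rfl <;> rcases hy with rfl | rfl
  · exact Iff.rfl
  · exact h v hv.1 hv.2
  · exact (h v hv.1 hv.2).symm
  · exact Iff.rfl

lemma aux_compl_single_module (T : Tournament V) (x : V)
    (h : ∀ p q, p ≠ x → q ≠ x → (T.arc x p ↔ T.arc x q)) :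
    T.IsModule {x}ᶜ := by
  intro p hp q hq v hv
  simp only [Set.mem_compl_iff, Set.mem_singleton_iff, not_not] at hp hq hv
  subst hv
  exact h p q hp hq

lemma aux_nontriv (T : Tournament V) (S : Set V) (u w z : V)
    (hu : u ∈ S) (hw : w ∈ S) (huw : u ≠ w) (hz : z ∉ S) :
    ¬ T.IsTrivialModule S := by
  rintro (h | ⟨t, h⟩ | h)
  · subst h; exact hu
  · subst h
    exact huw ((Set.mem_singleton_iff.mp hu).trans (Set.mem_singleton_iff.mp hw).symm)
  · subst h; exact hz (Set.mem_univ z)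

lemma aux_no_trans (T : Tournament V) (M : Set V) (h : T.IsMinimalComodule M)
    (x y z : V) (hM : M = {x, y, z}) (hxy' : x ≠ y) (hxz' : x ≠ z) (hyz' : y ≠ z)
    (axy : T.arc x y) (ayz : T.arc y z) (axz : T.arc x z) : False := by
  subst hM
  have nyx : ¬ T.arc y x := (T.total x y hxy').mp axy
  have nzy : ¬ T.arc z y := (T.total y z hyz').mp ayz
  have nzx : ¬ T.arc z x := (T.total x z hxz').mp axz
  obtain ⟨hco, hmin⟩ := h
  have hxM : x ∈ ({x, y, z} : Set V) := by simp
  have hyM : y ∈ ({x, y, z} : Set V) := by simp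
  have hzM : z ∈ ({x, y, z} : Set V) := by simp
  rcases hco with ⟨hmod, hnt⟩ | ⟨hmod, hnt⟩
  · -- M is a nontrivial module; N = {x, y} is a smaller comodule
    have hNmod : T.IsModule {x, y} := by
      apply aux_pair_module
      intro v hvx hvy
      by_cases hvM : v ∈ ({x, y, z} : Set V)
      · have hvz : v = z := by
          rcases hvM with h' | h' | h' <;> first | exact absurd h' hvx | exact absurd h' hvy | exact h'
        subst hvz
        exact iff_of_false nzx nzy
      · exact hmod x hxM y hyM v hvM
    have hN : T.IsComodule {x, y} :=
      Or.inl ⟨hNmod, aux_nontriv T _ x y z (by simp) (by simp) hxy'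
        (by simp only [Set.mem_insert_iff, Set.mem_singleton_iff, not_or]
            exact ⟨fun h' => hxz' h'.symm, fun h' => hyz' h'.symm⟩)⟩
    have heq := hmin {x, y} hN (by intro p hp; simp only [Set.mem_insert_iff, Set.mem_singleton_iff] at hp ⊢; tauto)
    have : z ∈ ({x, y} : Set V) := heq ▸ hzM
    simp only [Set.mem_insert_iff, Set.mem_singleton_iff] at this
    rcases this with h' | h'
    · exact hxz' h'.symm
    · exact hyz' h'.symm
  · -- Mᶜ is a nontrivial module
    have hdne : ({x, y, z} : Set V)ᶜ ≠ ∅ := by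
      intro h'
      exact hnt (Or.inl h')
    obtain ⟨d, hd⟩ := Set.nonempty_iff_ne_empty.mpr hdne
    have hdM : d ∉ ({x, y, z} : Set V) := hd
    have unif : ∀ u ∈ ({x, y, z} : Set V), ∀ d', d' ∉ ({x, y, z} : Set V) →
        (T.arc u d' ↔ T.arc u d) := by
      intro u hu d' hd'
      exact hmod d' hd' d hd u (by simp only [Set.mem_compl_iff, not_not]; exact hu)
    by_cases ex : T.arc x d
    · -- x beats everything; {x} is a comodule
      have huni : ∀ p, p ≠ x → T.arc x p := by
        intro p hp
        by_cases hpM : p ∈ ({x, y, z} : Set V)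
        · rcases hpM with h' | h' | h'
          · exact absurd h' hp
          · subst h'; exact axy
          · subst h'; exact axz
        · exact (unif x hxM p hpM).mpr ex
      have hmodc : T.IsModule {x}ᶜ :=
        aux_compl_single_module T x (fun p q hp hq => iff_of_true (huni p hp) (huni q hq))
      have hN : T.IsComodule {x} :=
        Or.inr ⟨hmodc, aux_nontriv T _ y z x
          (by simp only [Set.mem_compl_iff, Set.mem_singleton_iff]; exact fun h' => hxy' h'.symm)
          (by simp only [Set.mem_compl_iff, Set.mem_singleton_iff]; exact fun h' => hxz' h'.symm)
          hyz' (by simp)⟩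
      have heq := hmin {x} hN (by simp)
      have : y ∈ ({x} : Set V) := heq ▸ hyM
      exact hxy' (Set.mem_singleton_iff.mp this).symm
    · by_cases ez : T.arc z d
      · by_cases ey : T.arc y d
        · -- N = {y, z}
          have hNmod : T.IsModule {y, z} := by
            apply aux_pair_module
            intro v hvy hvz
            by_cases hvM : v ∈ ({x, y, z} : Set V)
            · have hvx : v = x := by
                rcases hvM with h' | h' | h' <;>
                  first | exact h' | exact absurd h' hvy | exact absurd h' hvz
              subst hvx
              exact iff_of_true axy axz
            · have h1 : ¬ T.arc v y := by
                intro h'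
                exact ((T.total v y hvy).mp h') (((unif y hyM v hvM)).mpr ey)
              have h2 : ¬ T.arc v z := by
                intro h'
                exact ((T.total v z hvz).mp h') (((unif z hzM v hvM)).mpr ez)
              exact iff_of_false h1 h2
          have hN : T.IsComodule {y, z} :=
            Or.inl ⟨hNmod, aux_nontriv T _ y z x (by simp) (by simp) hyz'
              (by simp only [Set.mem_insert_iff, Set.mem_singleton_iff, not_or]
                  exact ⟨hxy', hxz'⟩)⟩
          have heq := hmin {y, z} hN
            (by intro p hp; simp only [Set.mem_insert_iff, Set.mem_singleton_iff] at hp ⊢; tauto)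
          have : x ∈ ({y, z} : Set V) := heq ▸ hxM
          simp only [Set.mem_insert_iff, Set.mem_singleton_iff] at this
          tauto
        · -- N = {x, y}
          have hNmod : T.IsModule {x, y} := by
            apply aux_pair_module
            intro v hvx hvy
            by_cases hvM : v ∈ ({x, y, z} : Set V)
            · have hvz : v = z := by
                rcases hvM with h' | h' | h' <;>
                  first | exact absurd h' hvx | exact absurd h' hvy | exact h'
              subst hvz
              exact iff_of_false nzx nzy
            · have h1 : T.arc v x := by
                refine (T.total v x hvx).mpr ?_
                intro h'
                exact ex ((unif x hxM v hvM).mp h')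
              have h2 : T.arc v y := by
                refine (T.total v y hvy).mpr ?_
                intro h'
                exact ey ((unif y hyM v hvM).mp h')
              exact iff_of_true h1 h2
          have hN : T.IsComodule {x, y} :=
            Or.inl ⟨hNmod, aux_nontriv T _ x y z (by simp) (by simp) hxy'
              (by simp only [Set.mem_insert_iff, Set.mem_singleton_iff, not_or]
                  exact ⟨fun h' => hxz' h'.symm, fun h' => hyz' h'.symm⟩)⟩
          have heq := hmin {x, y} hN
            (by intro p hp; simp only [Set.mem_insert_iff, Set.mem_singleton_iff] at hp ⊢; tauto)
          have : z ∈ ({x, y} : Set V) := heq ▸ hzM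
          simp only [Set.mem_insert_iff, Set.mem_singleton_iff] at this
          rcases this with h' | h'
          · exact hxz' h'.symm
          · exact hyz' h'.symm
      · -- everything beats z; {z} is a comodule
        have huni : ∀ p, p ≠ z → ¬ T.arc z p := by
          intro p hp
          by_cases hpM : p ∈ ({x, y, z} : Set V)
          · rcases hpM with h' | h' | h'
            · subst h'; exact nzx
            · subst h'; exact nzy
            · exact absurd h' hp
          · intro h'
            exact ez ((unif z hzM p hpM).mp h')
        have hmodc : T.IsModule {z}ᶜ :=
          aux_compl_single_module T z (fun p q hp hq => iff_of_false (huni p hp) (huni q hq))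
        have hN : T.IsComodule {z} :=
          Or.inr ⟨hmodc, aux_nontriv T _ x y z
            (by simp only [Set.mem_compl_iff, Set.mem_singleton_iff]; exact hxz')
            (by simp only [Set.mem_compl_iff, Set.mem_singleton_iff]; exact hyz')
            hxy' (by simp)⟩
        have heq := hmin {z} hN (by simp)
        have : x ∈ ({z} : Set V) := heq ▸ hxM
        exact hxz' (Set.mem_singleton_iff.mp this)

lemma aux_cycle_iso (T : Tournament V) (a b c : V)
    (hab : a ≠ b) (hac : a ≠ c) (hbc : b ≠ c)
    (h1 : T.arc a b) (h2 : T.arc b c) (h3 : T.arc c a)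
    (M : Set V) (hM : M = {a, b, c}) :
    (T.restrict M).Iso C3 := by
  classical
  subst hM
  have n1 : ¬ T.arc b a := (T.total a b hab).mp h1
  have n2 : ¬ T.arc c b := (T.total b c hbc).mp h2
  have n3 : ¬ T.arc a c := (T.total c a hac.symm).mp h3
  have naa := T.irrefl a
  have nbb := T.irrefl b
  have ncc := T.irrefl c
  refine ⟨⟨fun x => if x.1 = a then 0 else if x.1 = b then 1 else 2,
    fun i => if i = 0 then ⟨a, by simp⟩ else if i = 1 then ⟨b, by simp⟩ else ⟨c, by simp⟩,
    ?_, ?_⟩, ?_⟩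
  · rintro ⟨x, hx⟩
    rcases hx with rfl | rfl | rfl
    · simp
    · simp [hab.symm, Ne.symm hab]
    · simp [Ne.symm hac, Ne.symm hbc]
  · intro i
    fin_cases i
    · simp
    · simp [Ne.symm hab]
    · simp [Ne.symm hac, Ne.symm hbc]
  · rintro ⟨x, hx⟩ ⟨y, hy⟩
    rcases hx with rfl | rfl | rfl <;> rcases hy with rfl | rfl | rfl <;>
      simp_all [Tournament.restrict, C3, Ne.symm hab, Ne.symm hac, Ne.symm hbc]

end Stmt5Aux

/-- If `M` is a minimal co-module of `T` with `|M| = 3`, then `T[M] ≃ C3`. -/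
theorem stmt_5 {V : Type} [Fintype V] (T : Tournament V) (M : Set V)
    (h : T.IsMinimalComodule M) (h3 : M.ncard = 3) :
    (T.restrict M).Iso C3 := by
  obtain ⟨a, b, c, hab, hac, hbc, hM⟩ := Set.ncard_eq_three.mp h3
  have hMacb : M = {a, c, b} := by rw [hM]; ext t; simp; tauto
  have hMcab : M = {c, a, b} := by rw [hM]; ext t; simp; tauto
  have hMbac : M = {b, a, c} := by rw [hM]; ext t; simp; tauto
  have hMbca : M = {b, c, a} := by rw [hM]; ext t; simp; tauto
  have hMcba : M = {c, b, a} := by rw [hM]; ext t; simp; tauto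
  by_cases p : T.arc a b <;> by_cases q : T.arc b c <;> by_cases r : T.arc a c
  · exact (aux_no_trans T M h a b c hM hab hac hbc p q r).elim
  · -- cycle a → b → c → a
    have hca : T.arc c a := (T.total c a hac.symm).mpr r
    exact aux_cycle_iso T a b c hab hac hbc p q hca M hM
  · -- a → c → b transitive
    have hcb : T.arc c b := (T.total c b hbc.symm).mpr q
    exact (aux_no_trans T M h a c b hMacb hac hab hbc.symm r hcb p).elim
  · -- c → a → b transitive
    have hca : T.arc c a := (T.total c a hac.symm).mpr r
    have hcb : T.arc c b := (T.total c b hbc.symm).mpr q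
    exact (aux_no_trans T M h c a b hMcab hac.symm hbc.symm hab hca p hcb).elim
  · -- b → a → c transitive
    have hba : T.arc b a := (T.total b a hab.symm).mpr p
    exact (aux_no_trans T M h b a c hMbac hab.symm hbc hac hba r q).elim
  · -- b → c → a transitive
    have hba : T.arc b a := (T.total b a hab.symm).mpr p
    have hca : T.arc c a := (T.total c a hac.symm).mpr r
    exact (aux_no_trans T M h b c a hMbca hbc hab.symm hac.symm q hca hba).elim
  · -- cycle a → c → b → a
    have hba : T.arc b a := (T.total b a hab.symm).mpr p
    have hcb : T.arc c b := (T.total c b hbc.symm).mpr q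
    exact aux_cycle_iso T a c b hac hab hbc.symm r hcb hba M hMacb
  · -- c → b → a transitive
    have hba : T.arc b a := (T.total b a hab.symm).mpr p
    have hca : T.arc c a := (T.total c a hac.symm).mpr r
    have hcb : T.arc c b := (T.total c b hbc.symm).mpr q
    exact (aux_no_trans T M h c b a hMcba hbc.symm hac.symm hab.symm hcb hba hca).elim
end

section
/- Let T be a tournament and let M be a minimal co-module of T which is a nontrivial module of T. Then |M| ≠ 4. -/
def arc4 (v : Bool × Bool × Bool × Bool × Bool × Bool) (i j : Fin 4) : Bool :=
  match i, j with
  | 0, 1 => v.1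
  | 0, 2 => v.2.1
  | 0, 3 => v.2.2.1
  | 1, 2 => v.2.2.2.1
  | 1, 3 => v.2.2.2.2.1
  | 2, 3 => v.2.2.2.2.2
  | 1, 0 => !v.1
  | 2, 0 => !v.2.1
  | 3, 0 => !v.2.2.1
  | 2, 1 => !v.2.2.2.1
  | 3, 1 => !v.2.2.2.2.1
  | 3, 2 => !v.2.2.2.2.2
  | _, _ => false

theorem arc4_key : ∀ v, ∃ S : Finset (Fin 4), 2 ≤ S.card ∧ S.card ≤ 3 ∧
    ∀ x ∈ S, ∀ y ∈ S, ∀ u, u ∉ S → arc4 v u x = arc4 v u y := by decide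

/-- A minimal co-module of `T` which is a nontrivial module of `T` does not have
cardinality 4. -/
theorem stmt_6 {V : Type} [Fintype V] (T : Tournament V) (M : Set V)
    (h : T.IsMinimalComodule M) (hmod : T.IsNontrivialModule M) :
    M.ncard ≠ 4 := by
  intro h4
  classical
  have hfin : M.Finite := M.toFinite
  haveI : Fintype M := hfin.fintype
  have hcard : Fintype.card M = 4 := by
    rw [← Nat.card_eq_fintype_card, Nat.card_coe_set_eq]; exact h4
  let e : M ≃ Fin 4 := Fintype.equivFinOfCardEq hcard
  let g : Fin 4 → V := fun i => (e.symm i : V)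
  have hg_inj : Function.Injective g := fun i j hh =>
    e.symm.injective (Subtype.ext hh)
  have hgM : ∀ i, g i ∈ M := fun i => (e.symm i).2
  have hgne : ∀ i j, i ≠ j → g i ≠ g j := fun i j hij hh => hij (hg_inj hh)
  let p : Fin 4 → Fin 4 → Bool := fun i j => decide (T.arc (g i) (g j))
  have hpd : ∀ i j, p i j = true ↔ T.arc (g i) (g j) := fun i j => decide_eq_true_iff
  have hptot : ∀ i j, i ≠ j → p j i = !p i j := by
    intro i j hij
    have ht : T.arc (g j) (g i) ↔ ¬ T.arc (g i) (g j) :=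
      T.total _ _ (hgne j i (Ne.symm hij))
    show decide (T.arc (g j) (g i)) = !decide (T.arc (g i) (g j))
    rw [decide_eq_decide.mpr ht, decide_not]
  have hpirr : ∀ i, p i i = false := by
    intro i
    simp only [p, decide_eq_false_iff_not]
    exact T.irrefl _
  let v : Bool × Bool × Bool × Bool × Bool × Bool :=
    (p 0 1, p 0 2, p 0 3, p 1 2, p 1 3, p 2 3)
  have harc : ∀ i j, arc4 v i j = p i j := by
    intro i j
    fin_cases i <;> fin_cases j <;>
      first
        | rfl
        | exact (hpirr _).symm
        | exact (hptot _ _ (by decide)).symm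
  obtain ⟨S, hS2, hS3, hSmod⟩ := arc4_key v
  let N : Set V := g '' ↑S
  have hNM : N ⊆ M := by rintro _ ⟨i, _, rfl⟩; exact hgM i
  have hNcard : N.ncard = S.card := by
    rw [Set.ncard_image_of_injective _ hg_inj, Set.ncard_coe_finset]
  have hNmod : T.IsModule N := by
    rintro x ⟨i, hi, rfl⟩ y ⟨j, hj, rfl⟩ u hu
    by_cases huM : u ∈ M
    · obtain ⟨k, hk⟩ : ∃ k, g k = u := ⟨e ⟨u, huM⟩, by simp [g]⟩
      subst hk
      have hkS : k ∉ S := fun hmem => hu ⟨k, hmem, rfl⟩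
      have heq := hSmod i hi j hj k hkS
      rw [harc, harc] at heq
      constructor
      · intro ha; exact (hpd k j).mp (by rw [← heq]; exact (hpd k i).mpr ha)
      · intro ha; exact (hpd k i).mp (by rw [heq]; exact (hpd k j).mpr ha)
    · exact hmod.1 (g i) (hgM i) (g j) (hgM j) u huM
  have hNne : N ≠ M := by
    intro hNM'
    rw [hNM', h4] at hNcard
    omega
  have hNnt : ¬ T.IsTrivialModule N := by
    rintro (hh | ⟨x, hh⟩ | hh)
    · rw [hh, Set.ncard_empty] at hNcard; omega
    · rw [hh, Set.ncard_singleton] at hNcard; omega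
    · have hMu : M = Set.univ := Set.eq_univ_of_univ_subset (hh ▸ hNM)
      exact hNne (hh.trans hMu.symm)
  exact hNne (h.2 N (Or.inl ⟨hNmod, hNnt⟩) hNM)
end

section
/- For every integer n ≥ 3, the maximum of Δ(T) over all tournaments T with n vertices equals ⌈(n+1)/2⌉; that is, every n-vertex tournament T satisfies Δ(T) ≤ ⌈(n+1)/2⌉, and there exists an n-vertex tournament T with Δ(T) = ⌈(n+1)/2⌉. -/
section Aux

open Tournament

/-- Upper bound: any comodular decomposition has at most (n+2)/2 members. -/
theorem aux_upper {V : Type} [Fintype V] {n : ℕ} (hcard : Fintype.card V = n)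
    (T : Tournament V) (D : Set (Set V)) (hD : T.IsComodularDecomposition D) :
    D.ncard ≤ (n + 2) / 2 := by
  classical
  obtain ⟨hcom, hdisj⟩ := hD
  have hfin : D.Finite := Set.toFinite D
  set F : Finset (Set V) := hfin.toFinset with hF
  have hmemF : ∀ M, M ∈ F ↔ M ∈ D := fun M => hfin.mem_toFinset
  -- every member is nonempty
  have hne : ∀ M ∈ D, M.Nonempty := by
    intro M hM
    rcases Set.eq_empty_or_nonempty M with rfl | h
    · rcases hcom _ hM with ⟨_, h2⟩ | ⟨_, h2⟩
      · exact absurd (Or.inl rfl) h2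
      · exact absurd (Or.inr (Or.inr (by simp))) h2
    · exact h
  -- dominant / dominated vertices
  set Dom : Set V := {x | ∀ y, y ≠ x → T.arc x y} with hDomDef
  set Lose : Set V := {x | ∀ y, y ≠ x → T.arc y x} with hLoseDef
  have hDomSS : Dom.Subsingleton := by
    intro x hx y hy
    by_contra hxy
    have h1 : T.arc x y := hx y (Ne.symm hxy)
    have h2 : T.arc y x := hy x hxy
    exact (T.total x y hxy).mp h1 h2
  have hLoseSS : Lose.Subsingleton := by
    intro x hx y hy
    by_contra hxy
    have h1 : T.arc y x := hx y (Ne.symm hxy)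
    have h2 : T.arc x y := hy x hxy
    exact (T.total x y hxy).mp h2 h1
  have hSing : ∀ M ∈ D, M.ncard = 1 → ∃ x, M = {x} ∧ x ∈ Dom ∪ Lose := by
    intro M hM h1
    obtain ⟨x, rfl⟩ := Set.ncard_eq_one.mp h1
    refine ⟨x, rfl, ?_⟩
    have hnt : T.IsNontrivialModule ({x} : Set V)ᶜ := by
      rcases hcom _ hM with ⟨_, h2⟩ | h2
      · exact absurd (Or.inr (Or.inl ⟨x, rfl⟩)) h2
      · exact h2
    have hmod := hnt.1
    by_cases h : ∃ y, y ≠ x ∧ T.arc x y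
    · obtain ⟨y, hy, hxy⟩ := h
      left
      intro z hz
      have := hmod y (by simpa using hy) z (by simpa using hz) x (by simp)
      exact this.mp hxy
    · push_neg at h
      right
      intro z hz
      exact (T.total z x hz).mpr (h z hz)
  -- count singletons
  set Sing : Finset (Set V) := F.filter (fun M => M.ncard = 1) with hSingDef
  set Big : Finset (Set V) := F.filter (fun M => ¬ M.ncard = 1) with hBigDef
  have hDLfin : (Dom ∪ Lose).Finite := Set.toFinite _
  have hSingCard : Sing.card ≤ 2 := by
    have hsub : Sing ⊆ Finset.image (fun x => ({x} : Set V)) hDLfin.toFinset := by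
      intro M hM
      rw [hSingDef, Finset.mem_filter] at hM
      obtain ⟨x, rfl, hx⟩ := hSing M ((hmemF M).mp hM.1) hM.2
      exact Finset.mem_image.mpr ⟨x, hDLfin.mem_toFinset.mpr hx, rfl⟩
    calc Sing.card ≤ (Finset.image (fun x => ({x} : Set V)) hDLfin.toFinset).card :=
          Finset.card_le_card hsub
      _ ≤ hDLfin.toFinset.card := Finset.card_image_le
      _ = (Dom ∪ Lose).ncard := (Set.ncard_eq_toFinset_card _ hDLfin).symm
      _ ≤ Dom.ncard + Lose.ncard := Set.ncard_union_le _ _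
      _ ≤ 2 := by
          have h1 : Dom.ncard ≤ 1 := by
            rcases Set.eq_empty_or_nonempty Dom with he | ⟨a, ha⟩
            · simp [he]
            · rw [hDomSS.eq_singleton_of_mem ha]; simp
          have h2 : Lose.ncard ≤ 1 := by
            rcases Set.eq_empty_or_nonempty Lose with he | ⟨a, ha⟩
            · simp [he]
            · rw [hLoseSS.eq_singleton_of_mem ha]; simp
          omega
  -- total cardinality bound
  have hsum : ∑ M ∈ F, M.ncard ≤ n := by
    have h1 : ∑ M ∈ F, M.ncard = ∑ M ∈ F, M.toFinset.card := by
      refine Finset.sum_congr rfl fun M _ => ?_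
      exact Set.ncard_eq_toFinset_card' M
    rw [h1, ← Finset.card_biUnion]
    · rw [← hcard]
      exact Finset.card_le_univ _
    · intro x hx y hy hxy
      have hd := hdisj ((hmemF x).mp hx) ((hmemF y).mp hy) hxy
      exact Set.disjoint_toFinset.mpr hd
  have hsplit : ∑ M ∈ F, M.ncard = ∑ M ∈ Sing, M.ncard + ∑ M ∈ Big, M.ncard :=
    (Finset.sum_filter_add_sum_filter_not F _ _).symm
  have hSingSum : ∑ M ∈ Sing, M.ncard = Sing.card := by
    rw [Finset.card_eq_sum_ones]
    refine Finset.sum_congr rfl fun M hM => ?_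
    exact (Finset.mem_filter.mp hM).2
  have hBigSum : 2 * Big.card ≤ ∑ M ∈ Big, M.ncard := by
    rw [two_mul]
    have := Finset.card_nsmul_le_sum Big (fun M => M.ncard) 2 ?_
    · simpa [smul_eq_mul, mul_comm, two_mul] using this
    · intro M hM
      rw [hBigDef, Finset.mem_filter] at hM
      have hpos : 0 < M.ncard := (Set.ncard_pos (Set.toFinite M)).mpr
        (hne M ((hmemF M).mp hM.1))
      show 2 ≤ M.ncard
      omega
  have hcards : Sing.card + Big.card = F.card :=
    Finset.card_filter_add_card_filter_not _
  have hDF : D.ncard = F.card := Set.ncard_eq_toFinset_card _ hfin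
  omega

/-- Interval modules of the transitive tournament. -/
theorem trans_module {n a b : ℕ} {M : Set (Fin n)}
    (h : ∀ x : Fin n, x ∈ M ↔ a ≤ x.val ∧ x.val ≤ b) :
    (transTournament n).IsModule M := by
  intro x hx y hy v hv
  have hx' := (h x).mp hx
  have hy' := (h y).mp hy
  have hv' : ¬(a ≤ v.val ∧ v.val ≤ b) := fun hc => hv ((h v).mpr hc)
  show v.val < x.val ↔ v.val < y.val
  omega

theorem nontrivial_of {V : Type} (T : Tournament V) {M : Set V} {x y z : V}
    (hxy : x ≠ y) (hx : x ∈ M) (hy : y ∈ M) (hz : z ∉ M) :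
    ¬ T.IsTrivialModule M := by
  rintro (rfl | ⟨w, rfl⟩ | rfl)
  · exact hx
  · exact hxy (hx.trans hy.symm)
  · exact hz (Set.mem_univ z)

end Aux

/-- For every `n ≥ 3`, the maximum of `Δ(T)` over `n`-vertex tournaments is
`⌈(n+1)/2⌉`. -/
theorem stmt_9 (n : ℕ) (hn : 3 ≤ n) :
    (∀ (V : Type) [Fintype V], Fintype.card V = n → ∀ T : Tournament V,
        T.Delta ≤ (n + 2) / 2) ∧
      ∃ T : Tournament (Fin n), T.Delta = (n + 2) / 2 := by
  classical
  have hub : ∀ (V : Type) [Fintype V], Fintype.card V = n → ∀ T : Tournament V,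
      T.Delta ≤ (n + 2) / 2 := by
    intro V _ hcard T
    refine csSup_le ⟨0, ∅, ⟨fun M h => absurd h (Set.notMem_empty M),
      Set.pairwise_empty _⟩, by simp⟩ ?_
    rintro m ⟨D, hD, rfl⟩
    exact aux_upper hcard T D hD
  refine ⟨hub, ?_⟩
  -- construction on the transitive tournament
  set T := transTournament n with hT
  set k := (n - 2) / 2 with hk
  set A : Set (Fin n) := {x | x.val = 0} with hA
  set B : Set (Fin n) := {x | x.val = n - 1} with hB
  set P : ℕ → Set (Fin n) := fun i => {x | x.val = 2 * i + 1 ∨ x.val = 2 * i + 2} with hP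
  set F : Finset (Set (Fin n)) := {A, B} ∪ (Finset.range k).image P with hF
  have hmemF : ∀ M, M ∈ F ↔ M = A ∨ M = B ∨ ∃ i < k, P i = M := by
    intro M
    simp [hF, Finset.mem_union, Finset.mem_insert, Finset.mem_image, Finset.mem_range,
      eq_comm]
  have hkn : 2 * k ≤ n - 2 := by omega
  -- comodule proofs
  have hcomA : T.IsComodule A := by
    right
    constructor
    · refine trans_module (a := 1) (b := n - 1) ?_
      intro x
      have := x.isLt
      simp [hA]
      omega
    · refine nontrivial_of T (x := ⟨1, by omega⟩) (y := ⟨2, by omega⟩)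
        (z := ⟨0, by omega⟩) ?_ ?_ ?_ ?_
      · intro h; exact absurd (congrArg Fin.val h) (by simp)
      · simp [hA]
      · simp [hA]
      · simp [hA]
  have hcomB : T.IsComodule B := by
    right
    constructor
    · refine trans_module (a := 0) (b := n - 2) ?_
      intro x
      have := x.isLt
      simp [hB]
      omega
    · refine nontrivial_of T (x := ⟨0, by omega⟩) (y := ⟨1, by omega⟩)
        (z := ⟨n - 1, by omega⟩) ?_ ?_ ?_ ?_
      · intro h; exact absurd (congrArg Fin.val h) (by simp)
      · simp [hB]; omega
      · simp [hB]; omega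
      · simp [hB]
  have hcomP : ∀ i < k, T.IsComodule (P i) := by
    intro i hi
    have h2 : 2 * i + 2 < n := by omega
    left
    constructor
    · refine trans_module (a := 2 * i + 1) (b := 2 * i + 2) ?_
      intro x
      simp [hP]
      omega
    · refine nontrivial_of T (x := ⟨2 * i + 1, by omega⟩) (y := ⟨2 * i + 2, by omega⟩)
        (z := ⟨0, by omega⟩) ?_ ?_ ?_ ?_
      · intro h; exact absurd (congrArg Fin.val h) (by simp)
      · simp [hP]
      · simp [hP]
      · simp [hP]
  -- disjointness on values
  have hdisj : (↑F : Set (Set (Fin n))).Pairwise Disjoint := by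
    intro M hM N hN hMN
    rw [Finset.mem_coe, hmemF] at hM hN
    rw [Set.disjoint_left]
    have hPi : ∀ i < k, ∀ x : Fin n, x ∈ P i →
        1 ≤ x.val ∧ x.val ≤ n - 2 := by
      intro i hi x hx
      simp [hP] at hx
      omega
    rcases hM with rfl | rfl | ⟨i, hi, rfl⟩ <;>
      rcases hN with rfl | rfl | ⟨j, hj, rfl⟩
    · exact absurd rfl hMN
    · intro x hx hx'
      simp [hA] at hx
      simp [hB] at hx'
      omega
    · intro x hx hx'
      simp [hA] at hx
      have := hPi j hj x hx'
      omega
    · intro x hx hx'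
      simp [hB] at hx
      simp [hA] at hx'
      omega
    · exact absurd rfl hMN
    · intro x hx hx'
      simp [hB] at hx
      have := hPi j hj x hx'
      omega
    · intro x hx hx'
      simp [hA] at hx'
      have := hPi i hi x hx
      omega
    · intro x hx hx'
      simp [hB] at hx'
      have := hPi i hi x hx
      omega
    · intro x hx hx'
      have hij : i ≠ j := fun h => hMN (by rw [h])
      simp [hP] at hx hx'
      omega
  have hdecomp : T.IsComodularDecomposition ↑F := by
    refine ⟨?_, hdisj⟩
    intro M hM
    rw [Finset.mem_coe, hmemF] at hM
    rcases hM with rfl | rfl | ⟨i, hi, rfl⟩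
    · exact hcomA
    · exact hcomB
    · exact hcomP i hi
  -- cardinality of F
  have hPA : ∀ i < k, P i ≠ A := by
    intro i hi h
    have : (⟨2 * i + 1, by omega⟩ : Fin n) ∈ P i := by simp [hP]
    rw [h] at this
    simp [hA] at this
  have hPB : ∀ i < k, P i ≠ B := by
    intro i hi h
    have : (⟨2 * i + 1, by omega⟩ : Fin n) ∈ P i := by simp [hP]
    rw [h] at this
    simp [hB] at this
    omega
  have hcardF : F.card = k + 2 := by
    rw [hF, Finset.card_union_of_disjoint, Finset.card_image_of_injOn,
      Finset.card_range]
    · have hAB : A ≠ B := by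
        intro h
        have : (⟨0, by omega⟩ : Fin n) ∈ A := by simp [hA]
        rw [h] at this
        simp [hB] at this
        omega
      rw [Finset.card_insert_of_notMem (by simp [hAB]), Finset.card_singleton]
      omega
    · intro i hi j hj hij
      rw [Finset.mem_coe, Finset.mem_range] at hi hj
      have : (⟨2 * i + 1, by omega⟩ : Fin n) ∈ P j := hij ▸ (by simp [hP])
      simp [hP] at this
      omega
    · rw [Finset.disjoint_left]
      intro M hM hM'
      rw [Finset.mem_image] at hM'
      obtain ⟨i, hi, rfl⟩ := hM'
      rw [Finset.mem_range] at hi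
      rw [Finset.mem_insert, Finset.mem_singleton] at hM
      rcases hM with h | h
      · exact hPA i hi h
      · exact hPB i hi h
  -- conclusion
  refine ⟨T, le_antisymm (hub (Fin n) (Fintype.card_fin n) T) ?_⟩
  have hmem : (n + 2) / 2 ∈ {m | ∃ D : Set (Set (Fin n)),
      T.IsComodularDecomposition D ∧ D.ncard = m} := by
    refine ⟨↑F, hdecomp, ?_⟩
    rw [Set.ncard_coe_finset, hcardF]
    omega
  exact le_csSup ⟨(n + 2) / 2, fun m hm => by
    obtain ⟨D, hD, rfl⟩ := hm
    exact aux_upper (Fintype.card_fin n) T D hD⟩ hmem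
end

section
/- Let n ≥ 2 be an integer. A tournament T with 2n vertices satisfies Δ(T) = ⌈(2n+1)/2⌉ = n+1 (the maximum of Δ over 2n-vertex tournaments) if and only if T is isomorphic to 3̲(1̲, T_{n−1}.2̲, 1̲) for some tournament T_{n−1} with n−1 vertices. -/
namespace Tournament
variable {V : Type}

lemma arc_of_not_arc (T : Tournament V) {x y : V} (h : x ≠ y) (h2 : ¬ T.arc y x) : T.arc x y :=
  (T.total x y h).mpr h2

lemma arc_asymm (T : Tournament V) {x y : V} (h1 : T.arc x y) (h2 : T.arc y x) : False := by
  by_cases h : x = y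
  · exact T.irrefl x (h ▸ h1)
  · exact ((T.total x y h).mp h1) h2

def IsSource (T : Tournament V) (a : V) : Prop := ∀ x, x ≠ a → T.arc a x
def IsSink (T : Tournament V) (b : V) : Prop := ∀ x, x ≠ b → T.arc x b

lemma source_unique (T : Tournament V) {a a' : V} (h : T.IsSource a) (h' : T.IsSource a') :
    a = a' := by
  by_contra hne
  exact T.arc_asymm (h a' (Ne.symm hne)) (h' a hne)

lemma sink_unique (T : Tournament V) {a a' : V} (h : T.IsSink a) (h' : T.IsSink a') :
    a = a' := by
  by_contra hne
  exact T.arc_asymm (h' a hne) (h a' (Ne.symm hne))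

lemma comodule_nonempty (T : Tournament V) {M : Set V} (h : T.IsComodule M) : M.Nonempty := by
  rcases Set.eq_empty_or_nonempty M with rfl | h2
  · rcases h with ⟨_, h⟩ | ⟨_, h⟩
    · exact absurd (Or.inl rfl) h
    · exact absurd (Or.inr (Or.inr (by simp))) h
  · exact h2

lemma nontrivial_two_le_ncard [Fintype V] (T : Tournament V) {M : Set V}
    (h : T.IsNontrivialModule M) : 2 ≤ M.ncard := by
  rcases h with ⟨_, h⟩
  rw [IsTrivialModule] at h
  push_neg at h
  obtain ⟨h0, h1, _⟩ := h
  obtain ⟨x, hx⟩ := h0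
  have hex : ∃ a ∈ M, ∃ b ∈ M, a ≠ b := by
    by_contra hc
    push_neg at hc
    exact h1 x (Set.eq_singleton_iff_unique_mem.mpr ⟨hx, fun y hy => hc y hy x hx⟩)
  exact (Set.one_lt_ncard (Set.toFinite M)).mpr hex

lemma nontrivial_ne_univ (T : Tournament V) {M : Set V}
    (h : T.IsNontrivialModule M) : M ≠ Set.univ :=
  fun hc => h.2 (Or.inr (Or.inr hc))

/-- A vertex whose complement-singleton is a module is a source or a sink. -/
lemma source_or_sink [Fintype V] (T : Tournament V) (hV : 2 ≤ Fintype.card V) {z : V}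
    (h : T.IsModule ({z}ᶜ)) : T.IsSource z ∨ T.IsSink z := by
  obtain ⟨u, hu⟩ := Fintype.exists_ne_of_one_lt_card (by omega) z
  by_cases ha : T.arc z u
  · left
    intro y hy
    have := h u (by simpa) y (by simpa) z (by simp)
    exact this.mp ha
  · right
    intro y hy
    have := h u (by simpa) y (by simpa) z (by simp)
    refine T.arc_of_not_arc hy (fun hc => ?_)
    exact ha (this.mpr hc)

/-- Counting: pairwise disjoint family of sets in a fintype. -/
lemma sum_ncard_aux [Fintype V] (D : Set (Set V)) (hdisj : D.Pairwise Disjoint) :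
    ∑ M ∈ D.toFinite.toFinset, M.ncard ≤ Fintype.card V ∧
    (∑ M ∈ D.toFinite.toFinset, M.ncard = Fintype.card V → ⋃₀ D = Set.univ) := by
  classical
  set F := D.toFinite.toFinset with hF
  set t : Set V → Finset V := fun M => M.toFinite.toFinset with ht
  have hdisj' : ∀ M ∈ F, ∀ N ∈ F, M ≠ N → Disjoint (t M) (t N) := by
    intro M hM N hN hne
    rw [Finset.disjoint_left]
    intro x hx hx'
    have hMD : M ∈ D := by simpa [hF] using hM
    have hND : N ∈ D := by simpa [hF] using hN
    have := hdisj hMD hND hne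
    exact (Set.disjoint_left.mp this) (by simpa [ht] using hx) (by simpa [ht] using hx')
  have hcard : (F.biUnion t).card = ∑ M ∈ F, M.ncard := by
    rw [Finset.card_biUnion hdisj']
    refine Finset.sum_congr rfl (fun M _ => ?_)
    exact (Set.ncard_eq_toFinset_card M (Set.toFinite M)).symm
  constructor
  · rw [← hcard]; exact Finset.card_le_univ _
  · intro hsum
    have : (F.biUnion t) = Finset.univ := Finset.eq_univ_of_card _ (hcard.trans hsum)
    ext x
    simp only [Set.mem_univ, iff_true, Set.mem_sUnion]
    have hx : x ∈ F.biUnion t := this ▸ Finset.mem_univ x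
    obtain ⟨M, hM, hxM⟩ := Finset.mem_biUnion.mp hx
    exact ⟨M, by simpa [hF] using hM, by simpa [ht] using hxM⟩

def GoodStruct [Fintype V] (T : Tournament V) (n : ℕ) : Prop :=
  ∃ (a b : V) (P : Set (Set V)), a ≠ b ∧ T.IsSource a ∧ T.IsSink b ∧
    P.ncard = n - 1 ∧ P.Pairwise Disjoint ∧
    (∀ M ∈ P, M.ncard = 2 ∧ T.IsModule M) ∧ ⋃₀ P = ({a, b} : Set V)ᶜ

lemma isNontrivial_of [Fintype V] (T : Tournament V) {M : Set V} (h : T.IsModule M)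
    (h2 : 2 ≤ M.ncard) (h3 : M ≠ Set.univ) : T.IsNontrivialModule M := by
  refine ⟨h, ?_⟩
  rintro (rfl | ⟨x, rfl⟩ | rfl)
  · simp at h2
  · simp at h2
  · exact h3 rfl

lemma decomp_main [Fintype V] {n : ℕ} (hn : 2 ≤ n) (T : Tournament V)
    (hcard : Fintype.card V = 2 * n) {D : Set (Set V)}
    (hD : T.IsComodularDecomposition D) :
    D.ncard ≤ n + 1 ∧ (D.ncard = n + 1 → T.GoodStruct n) := by
  classical
  obtain ⟨hcom, hdisj⟩ := hD
  have hVcard : 2 ≤ Fintype.card V := by omega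
  set F : Finset (Set V) := D.toFinite.toFinset with hF
  have hmemF : ∀ M, M ∈ F ↔ M ∈ D := fun M => D.toFinite.mem_toFinset
  set F₁ : Finset (Set V) := F.filter (fun M => M.ncard = 1) with hF₁
  set F₂ : Finset (Set V) := F.filter (fun M => ¬ M.ncard = 1) with hF₂
  have hcards : F₁.card + F₂.card = F.card :=
    Finset.card_filter_add_card_filter_not _
  have hsplit : ∑ M ∈ F₁, M.ncard + ∑ M ∈ F₂, M.ncard = ∑ M ∈ F, M.ncard :=
    Finset.sum_filter_add_sum_filter_not F _ _
  have hle : ∑ M ∈ F, M.ncard ≤ 2 * n := by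
    have := (Tournament.sum_ncard_aux D hdisj).1
    rwa [hcard] at this
  have hF1sum : ∑ M ∈ F₁, M.ncard = F₁.card := by
    rw [Finset.sum_congr rfl (fun M hM => (Finset.mem_filter.mp hM).2),
      Finset.sum_const, smul_eq_mul, mul_one]
  have h2leF2 : ∀ M ∈ F₂, 2 ≤ M.ncard := by
    intro M hM
    obtain ⟨hMF, hne1⟩ := Finset.mem_filter.mp hM
    have hMD : M ∈ D := (hmemF M).mp hMF
    have hpos : 0 < M.ncard :=
      (Set.ncard_pos (Set.toFinite M)).mpr (T.comodule_nonempty (hcom M hMD))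
    omega
  have hF2sum : 2 * F₂.card ≤ ∑ M ∈ F₂, M.ncard := by
    calc 2 * F₂.card = F₂.card • 2 := by rw [smul_eq_mul]; ring
    _ ≤ _ := Finset.card_nsmul_le_sum F₂ _ 2 h2leF2
  have hsing : ∀ M ∈ F₁, ∃ z, M = {z} ∧ (T.IsSource z ∨ T.IsSink z) := by
    intro M hM
    obtain ⟨hMF, h1⟩ := Finset.mem_filter.mp hM
    obtain ⟨z, rfl⟩ := Set.ncard_eq_one.mp h1
    refine ⟨z, rfl, ?_⟩
    rcases hcom _ ((hmemF _).mp hMF) with hnt | hnt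
    · exact absurd (Or.inr (Or.inl ⟨z, rfl⟩)) hnt.2
    · exact T.source_or_sink hVcard hnt.1
  have hF1card : F₁.card ≤ 2 := by
    by_contra hgt
    push_neg at hgt
    obtain ⟨A, B, C, hA, hB, hC, hAB, hAC, hBC⟩ := Finset.two_lt_card_iff.mp hgt
    obtain ⟨x, rfl, hx⟩ := hsing A hA
    obtain ⟨y, rfl, hy⟩ := hsing B hB
    obtain ⟨z, rfl, hz⟩ := hsing C hC
    have hxy : x ≠ y := fun h => hAB (by rw [h])
    have hxz : x ≠ z := fun h => hAC (by rw [h])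
    have hyz : y ≠ z := fun h => hBC (by rw [h])
    rcases hx with hx | hx <;> rcases hy with hy | hy <;> rcases hz with hz | hz
    · exact hxy (T.source_unique hx hy)
    · exact hxy (T.source_unique hx hy)
    · exact hxz (T.source_unique hx hz)
    · exact hyz (T.sink_unique hy hz)
    · exact hyz (T.source_unique hy hz)
    · exact hxz (T.sink_unique hx hz)
    · exact hxy (T.sink_unique hx hy)
    · exact hxy (T.sink_unique hx hy)
  have hDcard : D.ncard = F.card := Set.ncard_eq_toFinset_card D (Set.toFinite D)
  have hbound : D.ncard ≤ n + 1 := by omega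
  refine ⟨hbound, ?_⟩
  intro hk
  have h1 : F₁.card = 2 := by omega
  have h2 : F₂.card = n - 1 := by omega
  have hsum2 : ∑ M ∈ F₂, M.ncard = 2 * F₂.card := by omega
  have hall2 : ∀ M ∈ F₂, M.ncard = 2 := by
    by_contra hc
    push_neg at hc
    obtain ⟨M₀, hM₀, hne2⟩ := hc
    have hlt : ∑ _M ∈ F₂, 2 < ∑ M ∈ F₂, M.ncard :=
      Finset.sum_lt_sum h2leF2
        ⟨M₀, hM₀, lt_of_le_of_ne (h2leF2 _ hM₀) (Ne.symm hne2)⟩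
    rw [Finset.sum_const, smul_eq_mul] at hlt
    omega
  have huniv : ⋃₀ D = Set.univ := by
    refine (Tournament.sum_ncard_aux D hdisj).2 ?_
    rw [hcard]
    change ∑ M ∈ F, M.ncard = 2 * n
    omega
  obtain ⟨A, B, hABne, hF1eq⟩ := Finset.card_eq_two.mp h1
  have hAF1 : A ∈ F₁ := by rw [hF1eq]; simp
  have hBF1 : B ∈ F₁ := by rw [hF1eq]; simp
  obtain ⟨x, hAx, hx⟩ := hsing A hAF1
  obtain ⟨y, hBy, hy⟩ := hsing B hBF1
  have hxy : x ≠ y := fun h => hABne (by rw [hAx, hBy, h])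
  have hAD : ({x} : Set V) ∈ D := (hmemF _).mp (hAx ▸ (Finset.mem_filter.mp hAF1).1)
  have hBD : ({y} : Set V) ∈ D := (hmemF _).mp (hBy ▸ (Finset.mem_filter.mp hBF1).1)
  have hmem1 : ∀ M ∈ F₁, M = ({x} : Set V) ∨ M = ({y} : Set V) := by
    intro M hM
    rw [hF1eq] at hM
    rcases Finset.mem_insert.mp hM with rfl | hM
    · exact Or.inl hAx
    · exact Or.inr ((Finset.mem_singleton.mp hM) ▸ hBy)
  have hkey : ∃ a b : V, a ≠ b ∧ T.IsSource a ∧ T.IsSink b ∧ ({a} : Set V) ∈ D ∧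
      ({b} : Set V) ∈ D ∧ ∀ M ∈ F₁, M = ({a} : Set V) ∨ M = ({b} : Set V) := by
    rcases hx with hx | hx <;> rcases hy with hy | hy
    · exact absurd (T.source_unique hx hy) hxy
    · exact ⟨x, y, hxy, hx, hy, hAD, hBD, hmem1⟩
    · exact ⟨y, x, hxy.symm, hy, hx, hBD, hAD, fun M hM => (hmem1 M hM).symm⟩
    · exact absurd (T.sink_unique hx hy) hxy
  obtain ⟨a, b, hab, hsrc, hsnk, haD, hbD, hF1mem⟩ := hkey
  have hnotmem : ∀ M ∈ F₂, a ∉ M ∧ b ∉ M := by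
    intro M hM
    have hMD : M ∈ D := (hmemF M).mp (Finset.mem_filter.mp hM).1
    have hM2 : M.ncard = 2 := hall2 M hM
    constructor
    · intro haM
      have hne : ({a} : Set V) ≠ M := fun h => by
        rw [← h] at hM2; simp at hM2
      have := hdisj haD hMD hne
      exact (Set.disjoint_left.mp this) rfl haM
    · intro hbM
      have hne : ({b} : Set V) ≠ M := fun h => by
        rw [← h] at hM2; simp at hM2
      have := hdisj hbD hMD hne
      exact (Set.disjoint_left.mp this) rfl hbM
  refine ⟨a, b, (↑F₂ : Set (Set V)), hab, hsrc, hsnk, ?_, ?_, ?_, ?_⟩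
  · rw [Set.ncard_coe_finset]; exact h2
  · refine Set.Pairwise.mono ?_ hdisj
    intro M hM
    exact (hmemF M).mp (Finset.mem_filter.mp hM).1
  · intro M hM
    have hMF2 : M ∈ F₂ := hM
    have hMD : M ∈ D := (hmemF M).mp (Finset.mem_filter.mp hMF2).1
    have hM2 : M.ncard = 2 := hall2 M hMF2
    refine ⟨hM2, ?_⟩
    rcases hcom M hMD with h | h
    · exact h.1
    · exfalso
      obtain ⟨haM, hbM⟩ := hnotmem M hMF2
      have hMne : M.Nonempty := by
        rw [← Set.ncard_pos (Set.toFinite M)]; omega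
      obtain ⟨u, hu⟩ := hMne
      have hua : u ≠ a := fun h => haM (h ▸ hu)
      have hub : u ≠ b := fun h => hbM (h ▸ hu)
      have hiff := h.1 a haM b hbM u (by simpa using hu)
      exact T.arc_asymm (hiff.mpr (hsnk u hub)) (hsrc u hua)
  · ext v
    simp only [Set.mem_sUnion, Finset.mem_coe, Set.mem_compl_iff, Set.mem_insert_iff,
      Set.mem_singleton_iff]
    constructor
    · rintro ⟨M, hM, hvM⟩
      obtain ⟨haM, hbM⟩ := hnotmem M hM
      push_neg
      exact ⟨fun h => haM (h ▸ hvM), fun h => hbM (h ▸ hvM)⟩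
    · intro hv
      push_neg at hv
      have : v ∈ ⋃₀ D := huniv ▸ Set.mem_univ v
      obtain ⟨M, hMD, hvM⟩ := this
      have hMF : M ∈ F := (hmemF M).mpr hMD
      by_cases h1c : M.ncard = 1
      · exfalso
        have hMF1 : M ∈ F₁ := Finset.mem_filter.mpr ⟨hMF, h1c⟩
        rcases hF1mem M hMF1 with rfl | rfl
        · exact hv.1 hvM
        · exact hv.2 hvM
      · exact ⟨M, Finset.mem_filter.mpr ⟨hMF, h1c⟩, hvM⟩

lemma goodstruct_delta [Fintype V] {n : ℕ} (hn : 2 ≤ n) (T : Tournament V)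
    (hcard : Fintype.card V = 2 * n) (hG : T.GoodStruct n) : T.Delta = n + 1 := by
  classical
  obtain ⟨a, b, P, hab, hsrc, hsnk, hPcard, hPdisj, hPmod, hPun⟩ := hG
  have hVcard : Fintype.card V = 2 * n := hcard
  -- membership facts
  have habP : ∀ M ∈ P, a ∉ M ∧ b ∉ M := by
    intro M hM
    have hsub : M ⊆ ({a, b} : Set V)ᶜ := hPun ▸ (Set.subset_sUnion_of_mem hM)
    constructor
    · intro h; exact (hsub h) (Or.inl rfl)
    · intro h; exact (hsub h) (Or.inr rfl)
  -- the compl of a singleton source/sink is a nontrivial module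
  have hcompl : ∀ z : V, (∀ x y, x ≠ z → y ≠ z → (T.arc z x ↔ T.arc z y)) →
      T.IsNontrivialModule ({z} : Set V)ᶜ := by
    intro z hz
    refine T.isNontrivial_of ?_ ?_ ?_
    · intro x hx y hy v hv
      have hvz : v = z := by simpa using hv
      subst hvz
      exact hz x y (by simpa using hx) (by simpa using hy)
    · have h1 : ({z} : Set V).ncard + (({z} : Set V)ᶜ).ncard = Nat.card V :=
        Set.ncard_add_ncard_compl _
      rw [Set.ncard_singleton, Nat.card_eq_fintype_card, hcard] at h1
      omega
    · intro h
      have : z ∈ ({z} : Set V)ᶜ := h ▸ Set.mem_univ z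
      simp at this
  have hacom : T.IsComodule ({a} : Set V) := by
    refine Or.inr (hcompl a ?_)
    intro x y hx hy
    exact iff_of_true (hsrc x hx) (hsrc y hy)
  have hbcom : T.IsComodule ({b} : Set V) := by
    refine Or.inr (hcompl b ?_)
    intro x y hx hy
    refine iff_of_false (fun h => T.arc_asymm h (hsnk x hx)) (fun h => T.arc_asymm h (hsnk y hy))
  have hPcom : ∀ M ∈ P, T.IsComodule M := by
    intro M hM
    obtain ⟨h2, hmod⟩ := hPmod M hM
    refine Or.inl (T.isNontrivial_of hmod (by omega) ?_)
    intro h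
    rw [h, Set.ncard_univ, Nat.card_eq_fintype_card, hcard] at h2
    omega
  set D : Set (Set V) := insert ({a} : Set V) (insert ({b} : Set V) P) with hD
  have haP : ({a} : Set V) ∉ P := fun h => (habP _ h).1 rfl
  have hbP : ({b} : Set V) ∉ P := fun h => (habP _ h).2 rfl
  have hDdec : T.IsComodularDecomposition D := by
    constructor
    · intro M hM
      rcases hM with rfl | rfl | hM
      · exact hacom
      · exact hbcom
      · exact hPcom M hM
    · rw [hD, Set.pairwise_insert, Set.pairwise_insert]
      refine ⟨⟨hPdisj, ?_⟩, ?_⟩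
      · intro M hM _
        have hb := (habP M hM).2
        constructor
        · exact Set.disjoint_left.mpr (by rintro x rfl; exact hb)
        · exact Set.disjoint_right.mpr (by rintro x rfl; exact hb)
      · rintro M (rfl | hM) hne
        · constructor
          · exact Set.disjoint_singleton_left.mpr (by simpa using hab)
          · exact Set.disjoint_singleton_left.mpr (by simpa using hab.symm)
        · have ha := (habP M hM).1
          constructor
          · exact Set.disjoint_left.mpr (by rintro x rfl; exact ha)
          · exact Set.disjoint_right.mpr (by rintro x rfl; exact ha)
  have hDcard : D.ncard = n + 1 := by
    have h1 : ({a} : Set V) ∉ insert ({b} : Set V) P := by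
      intro h
      rcases h with h | h
      · exact hab (by simpa using h)
      · exact haP h
    rw [hD, Set.ncard_insert_of_notMem h1 (Set.Finite.insert _ (Set.toFinite P)),
      Set.ncard_insert_of_notMem hbP (Set.toFinite P), hPcard]
    omega
  -- now compute the sSup
  have hbdd : ∀ m ∈ {m | ∃ D : Set (Set V), T.IsComodularDecomposition D ∧ D.ncard = m},
      m ≤ n + 1 := by
    rintro m ⟨D', hD', rfl⟩
    exact (T.decomp_main hn hcard hD').1
  have hmem : (n + 1) ∈ {m | ∃ D : Set (Set V), T.IsComodularDecomposition D ∧ D.ncard = m} :=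
    ⟨D, hDdec, hDcard⟩
  refine le_antisymm (csSup_le ⟨n + 1, hmem⟩ hbdd) (le_csSup ⟨n + 1, hbdd⟩ hmem)

lemma delta_goodstruct [Fintype V] {n : ℕ} (hn : 2 ≤ n) (T : Tournament V)
    (hcard : Fintype.card V = 2 * n) (h : T.Delta = n + 1) : T.GoodStruct n := by
  have hne : Set.Nonempty {m | ∃ D : Set (Set V), T.IsComodularDecomposition D ∧ D.ncard = m} :=
    ⟨0, ∅, ⟨fun M hM => absurd hM (Set.notMem_empty M), Set.pairwise_empty _⟩, Set.ncard_empty _⟩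
  have hbdd : BddAbove {m | ∃ D : Set (Set V), T.IsComodularDecomposition D ∧ D.ncard = m} := by
    refine ⟨n + 1, ?_⟩
    rintro m ⟨D', hD', rfl⟩
    exact (T.decomp_main hn hcard hD').1
  have hmem := Nat.sSup_mem hne hbdd
  rw [show sSup {m | ∃ D : Set (Set V), T.IsComodularDecomposition D ∧ D.ncard = m} = T.Delta
    from rfl, h] at hmem
  obtain ⟨D, hD, hDc⟩ := hmem
  exact (T.decomp_main hn hcard hD).2 hDc

end Tournament

lemma fin2_cases (s : Fin 2) : s = 0 ∨ s = 1 := by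
  rcases s with ⟨v, hv⟩
  interval_cases v
  · exact Or.inl rfl
  · exact Or.inr rfl

/-- helper: characterization of middle arcs of `w3 (prodTwo S)` -/
lemma w3_lex_ne {k : ℕ} (S : Tournament (Fin k)) {i j : Fin k} (s t : Fin 2) (h : i ≠ j) :
    (w3 (prodTwo S)).arc (.inr (.inl ⟨i, s⟩)) (.inr (.inl ⟨j, t⟩)) ↔ S.arc i j := by
  constructor
  · intro hl
    cases hl with
    | left a b h1 => exact h1
    | right a b h1 => exact absurd rfl h
  · intro h1; exact Sigma.Lex.left _ _ h1

lemma w3_lex_eq {k : ℕ} (S : Tournament (Fin k)) (i : Fin k) (s t : Fin 2) :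
    (w3 (prodTwo S)).arc (.inr (.inl ⟨i, s⟩)) (.inr (.inl ⟨i, t⟩)) ↔ s.val < t.val := by
  constructor
  · intro hl
    cases hl with
    | left a b h1 => exact absurd h1 (S.irrefl i)
    | right a b h1 => exact h1
  · intro h1; exact Sigma.Lex.right _ _ h1

/-- the standard map used to build isomorphisms. -/
def mkMap {V : Type} {k : ℕ} (a b : V) (w : Fin k → Fin 2 → V) :
    Fin 1 ⊕ ((Σ _ : Fin k, Fin 2) ⊕ Fin 1) → V :=
  Sum.elim (fun _ => a) (Sum.elim (fun q => w q.1 q.2) (fun _ => b))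

@[simp] lemma mkMap_inl {V : Type} {k : ℕ} (a b : V) (w : Fin k → Fin 2 → V) (j : Fin 1) :
    mkMap a b w (.inl j) = a := rfl
@[simp] lemma mkMap_mid {V : Type} {k : ℕ} (a b : V) (w : Fin k → Fin 2 → V)
    (q : Σ _ : Fin k, Fin 2) : mkMap a b w (.inr (.inl q)) = w q.1 q.2 := rfl
@[simp] lemma mkMap_inr {V : Type} {k : ℕ} (a b : V) (w : Fin k → Fin 2 → V) (j : Fin 1) :
    mkMap a b w (.inr (.inr j)) = b := rfl

lemma iso_to_goodstruct {V : Type} [Fintype V] {n : ℕ} (T : Tournament V)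
    (hiso : ∃ S : Tournament (Fin (n - 1)), T.Iso (w3 (prodTwo S))) : T.GoodStruct n := by
  classical
  obtain ⟨S, e, he⟩ := hiso
  set W := w3 (prodTwo S) with hW
  set a := e.symm (.inl 0) with ha
  set b := e.symm (.inr (.inr 0)) with hb
  have hea : e a = .inl 0 := by rw [ha]; exact e.apply_symm_apply _
  have heb : e b = .inr (.inr 0) := by rw [hb]; exact e.apply_symm_apply _
  have hab : a ≠ b := by
    intro h
    rw [ha, hb] at h
    exact absurd (e.symm.injective h) (by simp)
  have hsrc : T.IsSource a := by
    intro x hx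
    rw [he, hea]
    rcases hq : e x with j | q | j
    · exfalso
      have : j = 0 := Subsingleton.elim _ _
      rw [this, ← hea] at hq
      exact hx (e.injective hq)
    · exact trivial
    · exact trivial
  have hsnk : T.IsSink b := by
    intro x hx
    rw [he, heb]
    rcases hq : e x with j | q | j
    · exact trivial
    · exact trivial
    · exfalso
      have : j = 0 := Subsingleton.elim _ _
      rw [this, ← heb] at hq
      exact hx (e.injective hq)
  -- the pairs
  set pr : Fin (n - 1) → Set V :=
    fun i => {e.symm (.inr (.inl ⟨i, 0⟩)), e.symm (.inr (.inl ⟨i, 1⟩))} with hpr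
  have hmempr : ∀ i x, x ∈ pr i ↔ (e x = .inr (.inl ⟨i, 0⟩) ∨ e x = .inr (.inl ⟨i, 1⟩)) := by
    intro i x
    rw [hpr]
    simp only [Set.mem_insert_iff, Set.mem_singleton_iff]
    constructor
    · rintro (rfl | rfl) <;> simp
    · rintro (h | h)
      · left; rw [← h]; exact (e.symm_apply_apply x).symm
      · right; rw [← h]; exact (e.symm_apply_apply x).symm
  have hprinj : Function.Injective pr := by
    intro i j hij
    have h0 : e.symm (.inr (.inl ⟨i, 0⟩)) ∈ pr j := by
      rw [← hij, hpr]; exact Or.inl rfl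
    rw [hmempr, e.apply_symm_apply] at h0
    rcases h0 with h | h
    · exact congrArg Sigma.fst (Sum.inl_injective (Sum.inr_injective h))
    · exfalso
      have h' := Sum.inl_injective (Sum.inr_injective h)
      obtain ⟨h1, h2⟩ := Sigma.mk.inj_iff.mp h'
      subst h1
      exact absurd (eq_of_heq h2) (by decide)
  refine ⟨a, b, Set.range pr, hab, hsrc, hsnk, ?_, ?_, ?_, ?_⟩
  · rw [← Set.image_univ, Set.ncard_image_of_injective _ hprinj, Set.ncard_univ]
    simp
  · rintro M ⟨i, rfl⟩ N ⟨j, rfl⟩ hne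
    have hij : i ≠ j := fun h => hne (by rw [h])
    rw [Set.disjoint_left]
    intro x hx hx'
    rw [hmempr] at hx hx'
    rcases hx with h | h <;> rcases hx' with h' | h' <;>
      · rw [h] at h'
        have := Sum.inl_injective (Sum.inr_injective h')
        exact hij (congrArg Sigma.fst this)
  · rintro M ⟨i, rfl⟩
    constructor
    · rw [hpr]
      refine Set.ncard_pair ?_
      intro h
      have h' := Sum.inl_injective (Sum.inr_injective (e.symm.injective h))
      obtain ⟨-, h2⟩ := Sigma.mk.inj_iff.mp h'
      exact absurd (eq_of_heq h2) (by decide)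
    · -- pr i is a module
      intro x hx y hy z hz
      rw [he z x, he z y]
      rw [hmempr] at hx hy
      have huni : ∀ t t' : Fin 2,
          (W.arc (e z) (.inr (.inl ⟨i, t⟩)) ↔ W.arc (e z) (.inr (.inl ⟨i, t'⟩))) := by
        intro t t'
        rcases hq : e z with j | ⟨jj, s⟩ | j
        · exact iff_of_true trivial trivial
        · have hji : jj ≠ i := by
            rintro rfl
            apply hz
            rw [hmempr]
            rcases fin2_cases s with rfl | rfl
            · exact Or.inl hq
            · exact Or.inr hq
          rw [hW, w3_lex_ne S s t hji, w3_lex_ne S s t' hji]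
        · exact iff_of_false (fun h => h) (fun h => h)
      rcases hx with hx | hx <;> rcases hy with hy | hy <;> rw [hx, hy]
      · exact huni 0 1
      · exact huni 1 0
  · ext x
    simp only [Set.mem_sUnion, Set.mem_compl_iff, Set.mem_insert_iff, Set.mem_singleton_iff]
    constructor
    · rintro ⟨M, ⟨i, rfl⟩, hx⟩
      rw [hmempr] at hx
      push_neg
      constructor
      · intro h
        subst h
        rcases hx with h | h <;> rw [hea] at h <;> exact absurd h (by simp)
      · intro h
        subst h
        rcases hx with h | h <;> rw [heb] at h <;> simp at h
    · intro hx
      push_neg at hx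
      rcases hq : e x with j | ⟨i, s⟩ | j
      · exfalso
        have : j = 0 := Subsingleton.elim _ _
        rw [this, ← hea] at hq
        exact hx.1 (e.injective hq)
      · refine ⟨pr i, ⟨i, rfl⟩, ?_⟩
        rw [hmempr]
        rcases fin2_cases s with rfl | rfl
        · exact Or.inl hq
        · exact Or.inr hq
      · exfalso
        have : j = 0 := Subsingleton.elim _ _
        rw [this, ← heb] at hq
        exact hx.2 (e.injective hq)

lemma goodstruct_to_iso {V : Type} [Fintype V] {n : ℕ} (T : Tournament V)
    (hG : T.GoodStruct n) :
    ∃ S : Tournament (Fin (n - 1)), T.Iso (w3 (prodTwo S)) := by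
  classical
  obtain ⟨a, b, P, hab, hsrc, hsnk, hPcard, hPdisj, hPmod, hPun⟩ := hG
  -- enumerate P
  obtain ⟨g, hgP, hginj, hgsurj⟩ :
      ∃ g : Fin (n - 1) → Set V, (∀ i, g i ∈ P) ∧ Function.Injective g ∧
        ∀ M ∈ P, ∃ i, g i = M := by
    have hPfin : P.Finite := Set.toFinite P
    have hcardP : hPfin.toFinset.card = n - 1 := by
      rw [← Set.ncard_eq_toFinset_card P hPfin, hPcard]
    set E := hPfin.toFinset.equivFinOfCardEq hcardP with hE
    refine ⟨fun i => (E.symm i : Set V), fun i => hPfin.mem_toFinset.mp (E.symm i).2, ?_, ?_⟩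
    · intro i j hij
      exact E.symm.injective (Subtype.ext hij)
    · intro M hM
      refine ⟨E ⟨M, hPfin.mem_toFinset.mpr hM⟩, ?_⟩
      simp only [Equiv.symm_apply_apply]
  -- ordered pairs within each block
  obtain ⟨u, v, huv, harcuv, hgeq⟩ :
      ∃ u v : Fin (n - 1) → V, (∀ i, u i ≠ v i) ∧ (∀ i, T.arc (u i) (v i)) ∧
        ∀ i, g i = {u i, v i} := by
    have hpair : ∀ i : Fin (n - 1), ∃ q : V × V,
        q.1 ≠ q.2 ∧ T.arc q.1 q.2 ∧ g i = {q.1, q.2} := by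
      intro i
      obtain ⟨x, y, hxy, heq⟩ := Set.ncard_eq_two.mp (hPmod _ (hgP i)).1
      by_cases harc : T.arc x y
      · exact ⟨(x, y), hxy, harc, heq⟩
      · exact ⟨(y, x), hxy.symm, T.arc_of_not_arc hxy.symm harc, by rw [heq, Set.pair_comm]⟩
    choose q hq1 hq2 hq3 using hpair
    exact ⟨fun i => (q i).1, fun i => (q i).2, hq1, hq2, hq3⟩
  have hum : ∀ i, u i ∈ g i := fun i => by rw [hgeq i]; exact Or.inl rfl
  have hvm : ∀ i, v i ∈ g i := fun i => by rw [hgeq i]; exact Or.inr rfl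
  have hgdisj : ∀ i j, i ≠ j → Disjoint (g i) (g j) := fun i j hij =>
    hPdisj (hgP i) (hgP j) (fun h => hij (hginj h))
  have hnotab : ∀ i, ∀ x ∈ g i, x ≠ a ∧ x ≠ b := by
    intro i x hx
    have hsub : g i ⊆ ({a, b} : Set V)ᶜ := hPun ▸ Set.subset_sUnion_of_mem (hgP i)
    have hc := hsub hx
    simp only [Set.mem_compl_iff, Set.mem_insert_iff, Set.mem_singleton_iff] at hc
    push_neg at hc
    exact hc
  have huu : ∀ i j, i ≠ j → u i ≠ u j := by
    intro i j hij h
    exact (Set.disjoint_left.mp (hgdisj i j hij)) (hum i) (h ▸ hum j)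
  -- the cross-block uniformity
  have hcross : ∀ i j, i ≠ j → ∀ x ∈ g i, ∀ y ∈ g j, (T.arc x y ↔ T.arc (u i) (u j)) := by
    intro i j hij x hx y hy
    have hxj : x ∉ g j := fun h => (Set.disjoint_left.mp (hgdisj i j hij)) hx h
    have huji : u j ∉ g i := fun h => (Set.disjoint_left.mp (hgdisj j i hij.symm)) (hum j) h
    have h1 : T.arc x y ↔ T.arc x (u j) := (hPmod _ (hgP j)).2 y hy (u j) (hum j) x hxj
    have h2 : T.arc (u j) x ↔ T.arc (u j) (u i) :=
      (hPmod _ (hgP i)).2 x hx (u i) (hum i) (u j) huji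
    have hxuj : x ≠ u j := fun h => hxj (h ▸ hum j)
    rw [h1, T.total x (u j) hxuj, h2, ← T.total (u i) (u j) (huu i j hij)]
  -- the quotient tournament
  obtain ⟨S, hSarc⟩ : ∃ S : Tournament (Fin (n - 1)),
      ∀ i j, S.arc i j ↔ (i ≠ j ∧ T.arc (u i) (u j)) := by
    refine ⟨⟨fun i j => i ≠ j ∧ T.arc (u i) (u j), fun i h => h.1 rfl, ?_⟩, fun i j => Iff.rfl⟩
    intro i j hij
    constructor
    · rintro ⟨-, h1⟩ ⟨-, h2⟩
      exact T.arc_asymm h1 h2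
    · intro h1
      exact ⟨hij, T.arc_of_not_arc (huu i j hij) (fun h2 => h1 ⟨hij.symm, h2⟩)⟩
  refine ⟨S, ?_⟩
  -- the map
  obtain ⟨w, hw0, hw1, hwm⟩ :
      ∃ w : Fin (n - 1) → Fin 2 → V, (∀ i, w i 0 = u i) ∧ (∀ i, w i 1 = v i) ∧
        ∀ i s, w i s ∈ g i := by
    refine ⟨fun i s => if s = 0 then u i else v i, fun i => if_pos rfl,
      fun i => if_neg (by decide), ?_⟩
    intro i s
    show (if s = 0 then u i else v i) ∈ g i
    by_cases h : s = 0
    · rw [if_pos h]; exact hum i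
    · rw [if_neg h]; exact hvm i
  have hwa : ∀ i s, w i s ≠ a := fun i s => (hnotab i _ (hwm i s)).1
  have hwb : ∀ i s, w i s ≠ b := fun i s => (hnotab i _ (hwm i s)).2
  set f := mkMap a b w with hf
  have hbij : Function.Bijective f := by
    constructor
    · rintro (j1 | ⟨i, s⟩ | j1) (j2 | ⟨j, t⟩ | j2) hz <;>
        simp only [hf, mkMap_inl, mkMap_mid, mkMap_inr] at hz
      · exact congrArg Sum.inl (Subsingleton.elim _ _)
      · exact absurd hz.symm (hwa j t)
      · exact absurd hz hab
      · exact absurd hz (hwa i s)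
      · -- middle-middle
        have hij : i = j := by
          by_contra hijne
          exact (Set.disjoint_left.mp (hgdisj i j hijne)) (hwm i s) (hz ▸ hwm j t)
        subst hij
        have hst : s = t := by
          rcases fin2_cases s with rfl | rfl <;> rcases fin2_cases t with rfl | rfl
          · rfl
          · rw [hw0, hw1] at hz; exact absurd hz (huv i)
          · rw [hw0, hw1] at hz; exact absurd hz.symm (huv i)
          · rfl
        rw [hst]
      · exact absurd hz (hwb i s)
      · exact absurd hz.symm hab
      · exact absurd hz.symm (hwb j t)
      · exact congrArg (fun z => Sum.inr (Sum.inr z)) (Subsingleton.elim j1 j2)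
    · intro x
      by_cases hxa : x = a
      · exact ⟨.inl 0, hxa.symm⟩
      by_cases hxb : x = b
      · exact ⟨.inr (.inr 0), hxb.symm⟩
      have hx : x ∈ ⋃₀ P := by
        rw [hPun]
        simp [hxa, hxb]
      obtain ⟨M, hM, hxM⟩ := hx
      obtain ⟨i, rfl⟩ := hgsurj M hM
      rw [hgeq i] at hxM
      simp only [Set.mem_insert_iff, Set.mem_singleton_iff] at hxM
      rcases hxM with rfl | rfl
      · exact ⟨.inr (.inl ⟨i, 0⟩), hw0 i⟩
      · exact ⟨.inr (.inl ⟨i, 1⟩), hw1 i⟩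
  -- arc-compatibility of f
  have key : ∀ z1 z2, (w3 (prodTwo S)).arc z1 z2 ↔ T.arc (f z1) (f z2) := by
    rintro (j1 | ⟨i, s⟩ | j1) (j2 | ⟨j, t⟩ | j2) <;>
      simp only [hf, mkMap_inl, mkMap_mid, mkMap_inr]
    · refine iff_of_false (fun h => ?_) (T.irrefl a)
      have h' : j1.val < j2.val := h
      omega
    · exact iff_of_true trivial (hsrc _ (hwa j t))
    · exact iff_of_true trivial (hsrc b (Ne.symm hab))
    · exact iff_of_false (fun h => h) (fun h => T.arc_asymm h (hsrc _ (hwa i s)))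
    · -- middle middle
      by_cases hij : i = j
      · subst hij
        rw [w3_lex_eq]
        rcases fin2_cases s with rfl | rfl <;> rcases fin2_cases t with rfl | rfl
        · exact iff_of_false (by decide) (T.irrefl _)
        · rw [hw0, hw1]
          exact iff_of_true (by decide) (harcuv i)
        · rw [hw0, hw1]
          exact iff_of_false (by decide) (fun h => T.arc_asymm h (harcuv i))
        · exact iff_of_false (by decide) (T.irrefl _)
      · rw [w3_lex_ne _ s t hij, hSarc,
          hcross i j hij (w i s) (hwm i s) (w j t) (hwm j t)]
        exact ⟨fun h => h.2, fun h => ⟨hij, h⟩⟩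
    · exact iff_of_true trivial (hsnk _ (hwb i s))
    · exact iff_of_false (fun h => h) (fun h => T.arc_asymm h (hsrc b (Ne.symm hab)))
    · exact iff_of_false (fun h => h) (fun h => T.arc_asymm h (hsnk _ (hwb j t)))
    · refine iff_of_false (fun h => ?_) (T.irrefl b)
      have h' : j1.val < j2.val := h
      omega
  refine ⟨(Equiv.ofBijective f hbij).symm, ?_⟩
  intro x y
  have hx : f ((Equiv.ofBijective f hbij).symm x) = x :=
    (Equiv.ofBijective f hbij).apply_symm_apply x
  have hy : f ((Equiv.ofBijective f hbij).symm y) = y :=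
    (Equiv.ofBijective f hbij).apply_symm_apply y
  have hk := key ((Equiv.ofBijective f hbij).symm x) ((Equiv.ofBijective f hbij).symm y)
  rw [hx, hy] at hk
  exact hk.symm



/-- A tournament with `2n` vertices (`n ≥ 2`) has maximal co-modular index
`Δ(T) = n+1` iff it is isomorphic to `3̲(1̲, T_{n-1}.2̲, 1̲)`. -/
theorem stmt_13 {V : Type} [Fintype V] (n : ℕ) (hn : 2 ≤ n) (T : Tournament V)
    (hcard : Fintype.card V = 2 * n) :
    T.Delta = n + 1 ↔ ∃ S : Tournament (Fin (n - 1)), T.Iso (w3 (prodTwo S)) :=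
  ⟨fun h => goodstruct_to_iso T (T.delta_goodstruct hn hcard h),
   fun h => T.goodstruct_delta hn hcard (iso_to_goodstruct T h)⟩
end
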